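/- arXiv:1008.0700 — 15 statements merged into one kernel-verified Lean document; each statement's English description precedes it below -/
import Mathlib

section
/- Let Q be a Jordan loop and x ∈ Q. Then x^3, x^4, and x^5 are well-defined; concretely, x·x² = x²·x, x³·x = x²·x², and x⁴·x = x²·x³, so every parenthesization of a product of 3, 4, or 5 copies of x yields x³, x⁴, x⁵ respectively. -/
/-- A Jordan loop: a set with multiplication and identity element such that
the equations `a * x = b` and `y * a = b` have unique solutions, the
multiplication is commutative, and the Jordan identity
`(x² * y) * x = x² * (y * x)` holds. -/
class JordanLoop (Q : Type*) extends Mul Q, One Q where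
  one_mul : ∀ x : Q, 1 * x = x
  mul_one : ∀ x : Q, x * 1 = x
  exists_unique_left_div : ∀ a b : Q, ∃! x : Q, a * x = b
  exists_unique_right_div : ∀ a b : Q, ∃! y : Q, y * a = b
  mul_comm : ∀ x y : Q, x * y = y * x
  jordan : ∀ x y : Q, ((x * x) * y) * x = (x * x) * (y * x)

/-- Right-associated power: `jpow x 0 = 1`, `jpow x (k+1) = x * jpow x k`. -/
def jpow {Q : Type*} [Mul Q] [One Q] (x : Q) : ℕ → Q
  | 0 => 1
  | k + 1 => x * jpow x k

/-- `IsProductOf x n a` means `a` is the value of some parenthesization of a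
product of `n` copies of `x`. -/
inductive IsProductOf {Q : Type*} [Mul Q] (x : Q) : ℕ → Q → Prop
  | single : IsProductOf x 1 x
  | mul : ∀ {m n : ℕ} {a b : Q}, IsProductOf x m a → IsProductOf x n b →
      IsProductOf x (m + n) (a * b)


section Aux
variable {Q : Type*} [JordanLoop Q] (x : Q)

private lemma jl_c2 : jpow x 2 * jpow x 2 = jpow x 4 := by
  have j := JordanLoop.jordan x x
  have hc := @JordanLoop.mul_comm Q _
  simp only [jpow, JordanLoop.mul_one]
  calc (x*x)*(x*x) = ((x*x)*x)*x := j.symm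
    _ = (x*(x*x))*x := by rw [hc (x*x) x]
    _ = x*(x*(x*x)) := hc _ _

private lemma jl_c3 : jpow x 2 * jpow x 3 = jpow x 5 := by
  have j := JordanLoop.jordan x (x*x)
  have hc := @JordanLoop.mul_comm Q _
  have h2 := jl_c2 x
  simp only [jpow, JordanLoop.mul_one] at *
  calc (x*x)*(x*(x*x)) = (x*x)*((x*x)*x) := by rw [hc (x*x) x]
    _ = ((x*x)*(x*x))*x := j.symm
    _ = (x*(x*(x*x)))*x := by rw [h2]
    _ = x*((x*(x*(x*x)))) := hc _ _

private lemma jl_mul_jpow : ∀ m n : ℕ, 1 ≤ m → 1 ≤ n → m + n ≤ 5 →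
    jpow x m * jpow x n = jpow x (m + n) := by
  have hc := @JordanLoop.mul_comm Q _
  have h2 := jl_c2 x
  have h3 := jl_c3 x
  intro m n hm hn hmn
  have hm' : m ≤ 4 := by omega
  have hn' : n ≤ 4 := by omega
  interval_cases m <;> interval_cases n <;>
    simp only [jpow, JordanLoop.mul_one] at * <;>
    first
      | rfl
      | exact h2
      | exact h3
      | omega
      | (rw [hc]; first | exact h2 | exact h3)
      | rw [hc]

private lemma jl_pos {n : ℕ} {a : Q} (h : IsProductOf x n a) : 1 ≤ n := by
  induction h <;> omega

private lemma jl_key : ∀ {n : ℕ} {a : Q}, IsProductOf x n a → n ≤ 5 → a = jpow x n := by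
  intro n a h
  induction h with
  | single => intro _; simp [jpow, JordanLoop.mul_one]
  | @mul m k a b hm hk ihm ihk =>
    intro hle
    have pm := jl_pos x hm
    have pk := jl_pos x hk
    rw [ihm (by omega), ihk (by omega)]
    exact jl_mul_jpow x m k pm pk hle

end Aux

/-- In a Jordan loop, `x^3`, `x^4`, `x^5` are well-defined: concretely
`x·x² = x²·x`, `x³·x = x²·x²`, `x⁴·x = x²·x³`, and every parenthesization
of a product of 3, 4, or 5 copies of `x` yields `x³`, `x⁴`, `x⁵`. -/
theorem small_powers_well_defined {Q : Type*} [JordanLoop Q] (x : Q) :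
    x * jpow x 2 = jpow x 2 * x ∧
    jpow x 3 * x = jpow x 2 * jpow x 2 ∧
    jpow x 4 * x = jpow x 2 * jpow x 3 ∧
    (∀ a : Q, IsProductOf x 3 a → a = jpow x 3) ∧
    (∀ a : Q, IsProductOf x 4 a → a = jpow x 4) ∧
    (∀ a : Q, IsProductOf x 5 a → a = jpow x 5) := by
  have hc := @JordanLoop.mul_comm Q _
  exact ⟨hc _ _, (hc _ _).trans (jl_c2 x).symm, (hc _ _).trans (jl_c3 x).symm,
    fun a h => jl_key x h (by omega), fun a h => jl_key x h (by omega),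
    fun a h => jl_key x h (by omega)⟩
end

section
/- In any Jordan loop, for every element x and every natural number n, x^n · x² = x^{n+2}. -/
lemma sq_mul_jpow {Q : Type*} [JordanLoop Q] (x : Q) (n : ℕ) :
    (x * x) * jpow x n = jpow x (n + 2) := by
  induction n with
  | zero => simp [jpow, JordanLoop.mul_one]
  | succ k ih =>
    have j := JordanLoop.jordan x (jpow x k)
    calc (x * x) * jpow x (k + 1) = (x * x) * (jpow x k * x) := by
          rw [jpow, JordanLoop.mul_comm x (jpow x k)]
      _ = ((x * x) * jpow x k) * x := j.symm
      _ = x * ((x * x) * jpow x k) := JordanLoop.mul_comm _ _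
      _ = jpow x (k + 3) := by rw [ih]; rfl

/-- In any Jordan loop, `x^n · x² = x^{n+2}`. -/
theorem pow_mul_pow_two {Q : Type*} [JordanLoop Q] (x : Q) (n : ℕ) :
    jpow x n * jpow x 2 = jpow x (n + 2) := by
  rw [JordanLoop.mul_comm, show jpow x 2 = x * x by simp [jpow, JordanLoop.mul_one],
    sq_mul_jpow]
end

section
/- In any Jordan loop, for every element x and every natural number n, x^n · x⁴ = x^{n+4}. -/
lemma jpow_mul_four_aux {Q : Type*} [JordanLoop Q] (x : Q) (n : ℕ) :
    jpow x n * jpow x 4 = jpow x (n + 4) ∧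
      jpow x (n + 1) * jpow x 4 = jpow x (n + 5) := by
  have h2 : jpow x 2 = x * x := by simp [jpow, JordanLoop.mul_one]
  have h4 : jpow x 4 = (x * x) * (x * x) := by rw [← sq_mul_jpow x 2, h2]
  induction n with
  | zero =>
      constructor
      · simp [jpow, JordanLoop.one_mul]
      · show (x * (1 : Q)) * jpow x 4 = x * jpow x 4
        rw [JordanLoop.mul_one]
  | succ k ih =>
      refine ⟨ih.2, ?_⟩
      have hj : (((x*x) * (x*x)) * jpow x k) * (x*x)
          = ((x*x) * (x*x)) * (jpow x k * (x*x)) := JordanLoop.jordan (x*x) (jpow x k)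
      calc jpow x (k + 2) * jpow x 4
          = ((x*x) * jpow x k) * ((x*x) * (x*x)) := by rw [← sq_mul_jpow, ← h4]
        _ = (jpow x k * (x*x)) * ((x*x) * (x*x)) := by rw [JordanLoop.mul_comm (x*x) (jpow x k)]
        _ = ((x*x) * (x*x)) * (jpow x k * (x*x)) := JordanLoop.mul_comm _ _
        _ = (((x*x) * (x*x)) * jpow x k) * (x*x) := hj.symm
        _ = (x*x) * (((x*x) * (x*x)) * jpow x k) := JordanLoop.mul_comm _ _
        _ = (x*x) * (jpow x 4 * jpow x k) := by rw [h4]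
        _ = (x*x) * (jpow x k * jpow x 4) := by rw [JordanLoop.mul_comm (jpow x 4)]
        _ = (x*x) * jpow x (k + 4) := by rw [ih.1]
        _ = jpow x (k + 6) := sq_mul_jpow x (k + 4)
        _ = jpow x (k + 2 + 4) := by ring_nf

/-- In any Jordan loop, `x^n · x⁴ = x^{n+4}`. -/
theorem pow_mul_pow_four {Q : Type*} [JordanLoop Q] (x : Q) (n : ℕ) :
    jpow x n * jpow x 4 = jpow x (n + 4) := by
  exact (jpow_mul_four_aux x n).1
end

section
/- In any Jordan loop, for every element x and every natural number n with n ≢ 3 (mod 4), x^n · x⁸ = x^{n+8}; moreover, if x³ · x⁸ = x^{11} holds, then x^n · x⁸ = x^{n+8} holds for all natural numbers n. -/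
namespace JordanLoopAux

variable {Q : Type*} [JordanLoop Q]

/-- Left translations by `x` and by `x*x` commute. -/
lemma opL (x y : Q) : x * ((x * x) * y) = (x * x) * (x * y) := by
  have h := JordanLoop.jordan x y
  rw [JordanLoop.mul_comm ((x * x) * y) x, JordanLoop.mul_comm y x] at h
  exact h

lemma two_step (x : Q) : ∀ n, jpow x (n + 2) = (x * x) * jpow x n := by
  intro n
  induction n with
  | zero =>
      show x * (x * 1) = (x * x) * 1
      rw [JordanLoop.mul_one, JordanLoop.mul_one]
  | succ n ih =>
      show x * jpow x (n + 2) = (x * x) * (x * jpow x n)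
      rw [ih]
      exact opL x (jpow x n)

lemma jpow_two (x : Q) : jpow x 2 = x * x := by
  show x * (x * 1) = x * x
  rw [JordanLoop.mul_one]

/-- `x² * (x² * xⁿ) = (x² * x²) * xⁿ`. -/
lemma ssq (x : Q) : ∀ n, (x * x) * ((x * x) * jpow x n)
    = ((x * x) * (x * x)) * jpow x n := by
  have key : ∀ n, ((x * x) * ((x * x) * jpow x n)
        = ((x * x) * (x * x)) * jpow x n) ∧
      ((x * x) * ((x * x) * jpow x (n + 1))
        = ((x * x) * (x * x)) * jpow x (n + 1)) := by
    intro n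
    induction n with
    | zero =>
        constructor
        · show (x * x) * ((x * x) * 1) = ((x * x) * (x * x)) * 1
          rw [JordanLoop.mul_one, JordanLoop.mul_one]
        · show (x * x) * ((x * x) * (x * 1)) = ((x * x) * (x * x)) * (x * 1)
          rw [JordanLoop.mul_one]
          calc (x * x) * ((x * x) * x)
              = (x * x) * (x * (x * x)) := by
                rw [JordanLoop.mul_comm ((x*x)) x]
            _ = x * ((x * x) * (x * x)) := (opL x (x * x)).symm
            _ = ((x * x) * (x * x)) * x := JordanLoop.mul_comm _ _
    | succ n ih =>
        refine ⟨ih.2, ?_⟩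
        rw [two_step x n]
        calc (x * x) * ((x * x) * ((x * x) * jpow x n))
            = (x * x) * (((x * x) * (x * x)) * jpow x n) := by rw [ih.1]
          _ = (x * x) * (((x*x) * (x*x)) * jpow x n) := rfl
          _ = ((x*x) * (x*x)) * ((x * x) * jpow x n) := by
              have := opL (x * x) (jpow x n)
              exact this
  exact fun n => (key n).1

lemma four_step (x : Q) : ∀ n, jpow x (n + 4) = jpow x 4 * jpow x n := by
  intro n
  have h4 : jpow x 4 = (x * x) * (x * x) := by
    have := two_step x 2
    rw [jpow_two] at this
    exact this
  have : jpow x (n + 4) = (x * x) * jpow x (n + 2) := two_step x (n + 2)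
  rw [this, two_step x n, ssq x n, h4]

lemma eight_eq (x : Q) : jpow x 8 = jpow x 4 * jpow x 4 := four_step x 4

/-- Induction step: from `n` to `n + 4`. -/
lemma step (x : Q) (n : ℕ)
    (ih : jpow x n * jpow x 8 = jpow x (n + 8)) :
    jpow x (n + 4) * jpow x 8 = jpow x (n + 4 + 8) := by
  have h12 : n + 4 + 8 = (n + 8) + 4 := by omega
  rw [four_step x n, h12, four_step x (n + 8), ← ih]
  calc (jpow x 4 * jpow x n) * jpow x 8
      = jpow x 8 * (jpow x 4 * jpow x n) := JordanLoop.mul_comm _ _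
    _ = (jpow x 4 * jpow x 4) * (jpow x 4 * jpow x n) := by rw [eight_eq]
    _ = jpow x 4 * ((jpow x 4 * jpow x 4) * jpow x n) :=
        (opL (jpow x 4) (jpow x n)).symm
    _ = jpow x 4 * (jpow x 8 * jpow x n) := by rw [← eight_eq]
    _ = jpow x 4 * (jpow x n * jpow x 8) := by
        rw [JordanLoop.mul_comm (jpow x 8) (jpow x n)]

lemma base0 (x : Q) : jpow x 0 * jpow x 8 = jpow x (0 + 8) :=
  JordanLoop.one_mul (jpow x 8)

lemma base1 (x : Q) : jpow x 1 * jpow x 8 = jpow x (1 + 8) := by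
  show (x * 1) * jpow x 8 = x * jpow x 8
  rw [JordanLoop.mul_one]

lemma base2 (x : Q) : jpow x 2 * jpow x 8 = jpow x (2 + 8) := by
  rw [jpow_two]
  exact (two_step x 8).symm

lemma up (x : Q) (r : ℕ) (hr : jpow x r * jpow x 8 = jpow x (r + 8)) :
    ∀ q, jpow x (4 * q + r) * jpow x 8 = jpow x (4 * q + r + 8) := by
  intro q
  induction q with
  | zero => simpa using hr
  | succ q ih =>
      have h : 4 * (q + 1) + r = (4 * q + r) + 4 := by omega
      rw [h]
      have := step x (4 * q + r) ih
      convert this using 2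

lemma of_mod (x : Q) (n : ℕ)
    (hr : jpow x (n % 4) * jpow x 8 = jpow x (n % 4 + 8)) :
    jpow x n * jpow x 8 = jpow x (n + 8) := by
  have hn : 4 * (n / 4) + n % 4 = n := Nat.div_add_mod n 4
  have := up x (n % 4) hr (n / 4)
  rwa [hn] at this

end JordanLoopAux

/-- In any Jordan loop, `x^n · x⁸ = x^{n+8}` whenever `n ≢ 3 (mod 4)`;
moreover, if `x³ · x⁸ = x^{11}`, then `x^n · x⁸ = x^{n+8}` for all `n`. -/
theorem pow_mul_pow_eight {Q : Type*} [JordanLoop Q] (x : Q) :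
    (∀ n : ℕ, n % 4 ≠ 3 → jpow x n * jpow x 8 = jpow x (n + 8)) ∧
    (jpow x 3 * jpow x 8 = jpow x 11 →
      ∀ n : ℕ, jpow x n * jpow x 8 = jpow x (n + 8)) := by
  constructor
  · intro n hn
    apply JordanLoopAux.of_mod
    have h : n % 4 = 0 ∨ n % 4 = 1 ∨ n % 4 = 2 := by omega
    rcases h with h | h | h <;> rw [h]
    · exact JordanLoopAux.base0 x
    · exact JordanLoopAux.base1 x
    · exact JordanLoopAux.base2 x
  · intro h3 n
    apply JordanLoopAux.of_mod
    have h : n % 4 = 0 ∨ n % 4 = 1 ∨ n % 4 = 2 ∨ n % 4 = 3 := by omega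
    rcases h with h | h | h | h <;> rw [h]
    · exact JordanLoopAux.base0 x
    · exact JordanLoopAux.base1 x
    · exact JordanLoopAux.base2 x
    · exact h3
end

section
/- In any Jordan loop, for every element x, every k ≥ 1, and every natural number n such that n ≡ 2^m (mod 2^{k-1}) for some m with 0 ≤ m ≤ k−1, one has x^n · x^{2^k} = x^{n + 2^k}. -/
namespace JordanLoopAux

variable {Q : Type*} [JordanLoop Q]

lemma jpow_one (x : Q) : jpow x 1 = x := by
  show x * (1 : Q) = x
  exact JordanLoop.mul_one x

/-- Key base lemma: `x² · xⁿ = x^{n+2}`. -/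
lemma sq_mul (x : Q) : ∀ n : ℕ, (x * x) * jpow x n = jpow x (n + 2)
  | 0 => by
      show (x * x) * 1 = x * (x * 1)
      rw [JordanLoop.mul_one, JordanLoop.mul_one]
  | n + 1 => by
      have j := JordanLoop.jordan x (jpow x n)
      rw [sq_mul x n, JordanLoop.mul_comm (jpow x n) x] at j
      rw [JordanLoop.mul_comm (jpow x (n + 2)) x] at j
      exact j.symm

lemma add_mod_of_dvd (j c d : ℕ) (h : d ∣ c) : (j + c) % d = j % d := by
  obtain ⟨e, rfl⟩ := h
  rw [Nat.add_mul_mod_self_left]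

/-- The main induction. -/
lemma key (x : Q) : ∀ k : ℕ, 1 ≤ k → ∀ n m : ℕ, m ≤ k - 1 →
    n % 2 ^ (k - 1) = 2 ^ m % 2 ^ (k - 1) →
    jpow x n * jpow x (2 ^ k) = jpow x (n + 2 ^ k) := by
  intro k
  induction k using Nat.strong_induction_on with
  | h k ih =>
    intro hk n m hm hmod
    rcases Nat.lt_or_ge k 2 with hk2 | hk2
    · -- base case k = 1
      have hk1 : k = 1 := by omega
      subst hk1
      rw [JordanLoop.mul_comm]
      show jpow x 2 * jpow x n = jpow x (n + 2)
      rw [jpow_two]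
      exact sq_mul x n
    · -- k = K + 1 with K ≥ 1
      obtain ⟨K, rfl⟩ : ∃ K, k = K + 1 := ⟨k - 1, by omega⟩
      have hK : 1 ≤ K := by omega
      simp only [Nat.add_sub_cancel] at hm hmod ⊢
      set u : Q := jpow x (2 ^ K) with hu
      have hdvd1 : (2 : ℕ) ^ (K - 1) ∣ 2 ^ K := pow_dvd_pow 2 (by omega)
      have hdvd2 : (2 : ℕ) ^ (K - 1) ∣ 2 ^ (K + 1) := pow_dvd_pow 2 (by omega)
      have h2KK : (2 : ℕ) ^ (K + 1) = 2 ^ K + 2 ^ K := by rw [pow_succ]; omega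
      -- the residue exponent for level K
      set m' : ℕ := min m (K - 1) with hm'
      have hmod' : n % 2 ^ (K - 1) = 2 ^ m' % 2 ^ (K - 1) := by
        have e1 : n % 2 ^ K % 2 ^ (K - 1) = n % 2 ^ (K - 1) :=
          Nat.mod_mod_of_dvd n hdvd1
        have e2 : (2 : ℕ) ^ m % 2 ^ K % 2 ^ (K - 1) = 2 ^ m % 2 ^ (K - 1) :=
          Nat.mod_mod_of_dvd _ hdvd1
        have e3 : (2 : ℕ) ^ m % 2 ^ (K - 1) = 2 ^ m' % 2 ^ (K - 1) := by
          rcases le_or_gt m (K - 1) with h | h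
          · rw [hm', min_eq_left h]
          · rw [hm', min_eq_right (by omega)]
            rw [Nat.mod_eq_zero_of_dvd (pow_dvd_pow 2 (by omega)),
              Nat.mod_eq_zero_of_dvd dvd_rfl]
        rw [← e1, ← e3, ← e2, hmod]
      -- level-K multiplication for the residue class of n
      have hP : ∀ j : ℕ, j % 2 ^ (K - 1) = 2 ^ m' % 2 ^ (K - 1) →
          jpow x j * u = jpow x (j + 2 ^ K) := fun j hj =>
        ih K (by omega) hK j m' (by omega) hj
      -- square of u
      have sq_u : u * u = jpow x (2 ^ (K + 1)) := by
        have := ih K (by omega) hK (2 ^ K) (K - 1) le_rfl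
          (by rw [Nat.mod_eq_zero_of_dvd hdvd1, Nat.mod_eq_zero_of_dvd dvd_rfl])
        rw [← h2KK] at this
        exact this
      -- base of the inner induction
      set j₀ : ℕ := n % 2 ^ K with hj₀
      have hj₀m : j₀ = 2 ^ m % 2 ^ K := hmod
      have base : (u * u) * jpow x j₀ = jpow x (j₀ + 2 ^ (K + 1)) := by
        rcases Nat.lt_or_ge m K with hmK | hmK
        · -- m ≤ K - 1, so j₀ = 2^m
          have hlt : (2 : ℕ) ^ m < 2 ^ K := Nat.pow_lt_pow_right (by omega) hmK
          have hj2 : j₀ = 2 ^ m := by rw [hj₀m, Nat.mod_eq_of_lt hlt]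
          rcases Nat.eq_zero_or_pos m with hm0 | hm1
          · -- m = 0 : multiply by x itself
            subst hm0
            simp only [pow_zero] at hj2
            rw [hj2, jpow_one, sq_u, JordanLoop.mul_comm]
            show jpow x (2 ^ (K + 1) + 1) = jpow x (1 + 2 ^ (K + 1))
            rw [Nat.add_comm]
          · -- 1 ≤ m ≤ K - 1 : the Jordan-identity argument
            have hmK1 : m ≤ K - 1 := by omega
            have hle1 : (2 : ℕ) ^ (m + 1) ≤ 2 ^ (K + 1) :=
              Nat.pow_le_pow_right (by omega) (by omega)
            have h2m : (2 : ℕ) ^ (m + 1) = 2 ^ m + 2 ^ m := by rw [pow_succ]; omega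
            have hle2 : (2 : ℕ) ^ m ≤ 2 ^ (K + 1) := by omega
            set v : Q := jpow x (2 ^ m) with hv
            set w : Q := jpow x (2 ^ (K + 1) - 2 ^ (m + 1)) with hw
            have hz1 : (2 : ℕ) ^ (m - 1) ∣ 2 ^ m := pow_dvd_pow 2 (by omega)
            -- v * v = x^{2^{m+1}}
            have sq_v : v * v = jpow x (2 ^ (m + 1)) := by
              have := ih m (by omega) hm1 (2 ^ m) (m - 1) le_rfl
                (by rw [Nat.mod_eq_zero_of_dvd hz1, Nat.mod_eq_zero_of_dvd dvd_rfl])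
              rw [← h2m] at this
              exact this
            -- w * v = x^{2^{K+1} - 2^m}
            have hwv : w * v = jpow x (2 ^ (K + 1) - 2 ^ m) := by
              have hd : (2 : ℕ) ^ (m - 1) ∣ 2 ^ (K + 1) - 2 ^ (m + 1) :=
                Nat.dvd_sub (pow_dvd_pow 2 (by omega)) (pow_dvd_pow 2 (by omega))
              have := ih m (by omega) hm1 (2 ^ (K + 1) - 2 ^ (m + 1)) (m - 1) le_rfl
                (by rw [Nat.mod_eq_zero_of_dvd hd, Nat.mod_eq_zero_of_dvd dvd_rfl])
              have harith : 2 ^ (K + 1) - 2 ^ (m + 1) + 2 ^ m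
                  = 2 ^ (K + 1) - 2 ^ m := by omega
              rw [harith] at this
              exact this
            -- (v*v) * w = x^{2^{K+1}}
            have hvvw : (v * v) * w = jpow x (2 ^ (K + 1)) := by
              rw [sq_v, JordanLoop.mul_comm]
              have hd : (2 : ℕ) ^ m ∣ 2 ^ (K + 1) - 2 ^ (m + 1) :=
                Nat.dvd_sub (pow_dvd_pow 2 (by omega)) (pow_dvd_pow 2 (by omega))
              have := ih (m + 1) (by omega) (by omega) (2 ^ (K + 1) - 2 ^ (m + 1)) m
                (by omega)
                (by simp only [Nat.add_sub_cancel]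
                    rw [Nat.mod_eq_zero_of_dvd hd, Nat.mod_eq_zero_of_dvd dvd_rfl])
              rw [Nat.sub_add_cancel hle1] at this
              exact this
            -- (v*v) * (w*v) = x^{2^{K+1} + 2^m}
            have hrhs : (v * v) * (w * v) = jpow x (2 ^ (K + 1) + 2 ^ m) := by
              rw [sq_v, hwv, JordanLoop.mul_comm]
              have hd : (2 : ℕ) ^ m ∣ 2 ^ (K + 1) - 2 ^ m :=
                Nat.dvd_sub (pow_dvd_pow 2 (by omega)) dvd_rfl
              have := ih (m + 1) (by omega) (by omega) (2 ^ (K + 1) - 2 ^ m) m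
                (by omega)
                (by simp only [Nat.add_sub_cancel]
                    rw [Nat.mod_eq_zero_of_dvd hd, Nat.mod_eq_zero_of_dvd dvd_rfl])
              have harith : 2 ^ (K + 1) - 2 ^ m + 2 ^ (m + 1)
                  = 2 ^ (K + 1) + 2 ^ m := by omega
              rw [harith] at this
              exact this
            have j := JordanLoop.jordan v w
            rw [hvvw, hrhs] at j
            -- j : x^{2^{K+1}} * v = x^{2^{K+1} + 2^m}
            rw [hj2, sq_u, JordanLoop.mul_comm, JordanLoop.mul_comm (jpow x (2 ^ m)),
              Nat.add_comm (2 ^ m) (2 ^ (K + 1))]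
            exact j
        · -- m = K, so j₀ = 0
          have hmK' : m = K := by omega
          have hj0 : j₀ = 0 := by
            rw [hj₀m, hmK', Nat.mod_self]
          rw [hj0]
          show (u * u) * 1 = jpow x (0 + 2 ^ (K + 1))
          rw [JordanLoop.mul_one, Nat.zero_add, sq_u]
      -- class of j₀ at level K - 1
      have hj₀class : j₀ % 2 ^ (K - 1) = 2 ^ m' % 2 ^ (K - 1) := by
        rw [hj₀, Nat.mod_mod_of_dvd n hdvd1]
        exact hmod'
      -- inner induction along steps of 2^K
      have main : ∀ t : ℕ, (u * u) * jpow x (j₀ + t * 2 ^ K)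
          = jpow x (j₀ + t * 2 ^ K + 2 ^ (K + 1)) := by
        intro t
        induction t with
        | zero => simpa using base
        | succ t iht =>
          set j : ℕ := j₀ + t * 2 ^ K with hj
          have hjclass : j % 2 ^ (K - 1) = 2 ^ m' % 2 ^ (K - 1) := by
            rw [hj, add_mod_of_dvd _ _ _ (Dvd.dvd.mul_left hdvd1 t)]
            exact hj₀class
          have h1 : jpow x j * u = jpow x (j + 2 ^ K) := hP j hjclass
          have h2 : jpow x (j + 2 ^ (K + 1)) * u
              = jpow x (j + 2 ^ (K + 1) + 2 ^ K) := by
            apply hP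
            rw [add_mod_of_dvd _ _ _ hdvd2]
            exact hjclass
          have jd := JordanLoop.jordan u (jpow x j)
          rw [iht, h2, h1] at jd
          have harith : j₀ + (t + 1) * 2 ^ K = j + 2 ^ K := by rw [hj]; ring
          have harith2 : j + 2 ^ (K + 1) + 2 ^ K = j + 2 ^ K + 2 ^ (K + 1) := by omega
          rw [harith, ← jd, harith2]
      -- conclude
      have hn : j₀ + (n / 2 ^ K) * 2 ^ K = n := Nat.mod_add_div' n (2 ^ K)
      have := main (n / 2 ^ K)
      rw [hn] at this
      rw [JordanLoop.mul_comm, ← sq_u]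
      exact this

end JordanLoopAux

/-- In any Jordan loop, if `k ≥ 1` and `n ≡ 2^m (mod 2^{k-1})` for some
`0 ≤ m ≤ k-1`, then `x^n · x^{2^k} = x^{n + 2^k}`. -/
theorem pow_mul_pow_two_pow {Q : Type*} [JordanLoop Q] (x : Q) (k n : ℕ)
    (hk : 1 ≤ k)
    (h : ∃ m : ℕ, m ≤ k - 1 ∧ n % 2 ^ (k - 1) = 2 ^ m % 2 ^ (k - 1)) :
    jpow x n * jpow x (2 ^ k) = jpow x (n + 2 ^ k) := by
  obtain ⟨m, hm, hmod⟩ := h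
  exact JordanLoopAux.key x k hk n m hm hmod
end

section
/- In any Jordan loop, for every element x and every n ≥ 1, x^{2^n} = (x^{2^{n-1}})², i.e., x^{2^n} = x^{2^{n-1}} · x^{2^{n-1}}. -/
/-- Lemma B: `x^{2k} = (x²)^k`. -/
lemma jpow_two_mul {Q : Type*} [JordanLoop Q] (x : Q) (k : ℕ) :
    jpow x (2 * k) = jpow (x * x) k := by
  induction k with
  | zero => rfl
  | succ m ih =>
    have : 2 * (m + 1) = 2 * m + 2 := by ring
    rw [this, ← sq_mul_jpow, ih]
    rfl

/-- In any Jordan loop, `x^{2^n} = (x^{2^{n-1}})²` for `n ≥ 1`. -/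
theorem pow_two_pow_eq_sq {Q : Type*} [JordanLoop Q] (x : Q) (n : ℕ)
    (hn : 1 ≤ n) :
    jpow x (2 ^ n) = jpow x (2 ^ (n - 1)) * jpow x (2 ^ (n - 1)) := by
  induction n generalizing x with
  | zero => omega
  | succ k ih =>
    simp only [Nat.add_sub_cancel]
    rcases Nat.eq_zero_or_pos k with hk | hk
    · subst hk
      simp [jpow, JordanLoop.mul_one]
    · have h1 : (2 : ℕ) ^ (k + 1) = 2 * 2 ^ k := by ring
      have h2 : (2 : ℕ) ^ k = 2 * 2 ^ (k - 1) := by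
        rw [← pow_succ']
        congr 1
        omega
      calc jpow x (2 ^ (k + 1)) = jpow (x * x) (2 ^ k) := by
            rw [h1, jpow_two_mul]
        _ = jpow (x * x) (2 ^ (k - 1)) * jpow (x * x) (2 ^ (k - 1)) := ih (x * x) hk
        _ = jpow x (2 ^ k) * jpow x (2 ^ k) := by
            rw [← jpow_two_mul, ← h2]
end

section
/- Let Q be a Jordan loop, x ∈ Q, and n a natural number with binary expansion n = a₀ + 2a₁ + 4a₂ + ⋯ + 2^k a_k (each a_i ∈ {0,1}). Then x^n = x^{1·a₀} · (x^{2·a₁} · (x^{4·a₂} · (⋯ · (x^{2^k·a_k})⋯))), where the product is right-associated and each factor x^{2^i·a_i} equals x^{2^i} if a_i = 1 and e if a_i = 0. -/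
/-- `binProd x i n` is the right-associated product
`x^{2^i·a₀} · (x^{2^{i+1}·a₁} · ( ⋯ ))` where `a₀a₁⋯` are the binary digits
of `n` (least significant first); a factor equals `x^{2^j}` if the digit is
`1` and `e` if it is `0`. -/
def binProd {Q : Type*} [Mul Q] [One Q] (x : Q) : ℕ → ℕ → Q
  | _, 0 => 1
  | i, n + 1 => jpow x (2 ^ i * ((n + 1) % 2)) * binProd x (i + 1) ((n + 1) / 2)
  termination_by _ n => n
  decreasing_by omega

lemma jpow_sq {Q : Type*} [JordanLoop Q] (x : Q) (k : ℕ) :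
    jpow (x * x) k = jpow x (2 * k) := by
  induction k with
  | zero => rfl
  | succ m ih =>
      show (x * x) * jpow (x * x) m = _
      rw [ih, sq_mul_jpow, Nat.mul_succ]

lemma binProd_succ {Q : Type*} [JordanLoop Q] (x : Q) (i m : ℕ) :
    binProd x (i + 1) m = binProd (x * x) i m := by
  induction m using Nat.strong_induction_on generalizing i with
  | _ m ih =>
      match m with
      | 0 => simp [binProd]
      | n + 1 =>
          rw [binProd, binProd, ih ((n + 1) / 2) (by omega) (i + 1), jpow_sq]
          congr 2
          ring

/-- In a Jordan loop, `x^n` equals the right-associated product of the powers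
`x^{2^i·aᵢ}` where `a_k ⋯ a_0` is the binary expansion of `n`. -/
theorem pow_eq_binary_product {Q : Type*} [JordanLoop Q] (x : Q) (n : ℕ) :
    jpow x n = binProd x 0 n := by
  induction n using Nat.strong_induction_on generalizing x with
  | _ n ih =>
      match n with
      | 0 => simp [jpow, binProd]
      | m + 1 =>
          rw [binProd, binProd_succ, ← ih ((m + 1) / 2) (by omega) (x * x),
            jpow_sq]
          rcases Nat.even_or_odd (m + 1) with h | h
          · obtain ⟨k, hk⟩ := h
            have h1 : (m + 1) % 2 = 0 := by omega
            have h2 : 2 * ((m + 1) / 2) = m + 1 := by omega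
            rw [h1, h2]
            simp [jpow, JordanLoop.one_mul]
          · obtain ⟨k, hk⟩ := h
            have h1 : (m + 1) % 2 = 1 := by omega
            have h2 : 2 * ((m + 1) / 2) = m := by omega
            rw [h1, h2]
            simp [jpow, JordanLoop.mul_one]
end

section
/- In any Jordan loop, for every element x, x² · x⁻¹ = x. -/
/-- In any Jordan loop, `x² · x⁻¹ = x`, where `x⁻¹` is the (unique) element
with `x · x⁻¹ = e`. -/
theorem sq_mul_inv {Q : Type*} [JordanLoop Q] (x xi : Q) (h : x * xi = 1) :
    jpow x 2 * xi = x := by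
  have h2 : jpow x 2 = x * x := by
    simp [jpow, JordanLoop.mul_one]
  rw [h2]
  have key : ((x * x) * xi) * x = x * x := by
    rw [JordanLoop.jordan, JordanLoop.mul_comm xi x, h, JordanLoop.mul_one]
  obtain ⟨y, -, huniq⟩ := JordanLoop.exists_unique_right_div x (x * x)
  rw [huniq _ key, huniq x rfl]
end

section
/- In any Jordan loop, for every element x, x⁴ · x⁻¹ = x³. -/
lemma JordanLoop.cancel_right {Q : Type*} [JordanLoop Q] (a b c : Q)
    (h : b * a = c * a) : b = c := by
  obtain ⟨y, _, hy⟩ := JordanLoop.exists_unique_right_div a (c * a)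
  exact (hy b h).trans (hy c rfl).symm

/-- In any Jordan loop, `x⁴ · x⁻¹ = x³`, where `x⁻¹` is the (unique) element
with `x · x⁻¹ = e`. -/
theorem pow_four_mul_inv {Q : Type*} [JordanLoop Q] (x xi : Q)
    (h : x * xi = 1) :
    jpow x 4 * xi = jpow x 3 := by
  have comm := JordanLoop.mul_comm (Q := Q)
  have jor := JordanLoop.jordan (Q := Q)
  -- Step 1: x² * xi = x
  have h1 : (x * x) * xi = x := by
    apply JordanLoop.cancel_right x
    rw [jor, comm xi x, h, JordanLoop.mul_one]
  -- Step 2: jpow x 4 = x² * x²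
  have h4 : jpow x 4 = (x * x) * (x * x) := by
    show x * (x * (x * (x * 1))) = _
    rw [JordanLoop.mul_one, comm x (x * (x * x)), comm x (x * x), jor]
  have h3 : jpow x 3 = x * (x * x) := by
    show x * (x * (x * 1)) = _
    rw [JordanLoop.mul_one]
  rw [h4, h3]
  -- Step 3: cancel x² on the right
  apply JordanLoop.cancel_right (x * x)
  rw [jor (x * x) xi, comm xi (x * x), h1, jor x (x * x),
    comm x (x * x), comm ((x * x) * x) (x * x)]
end

section
/- In any Jordan loop, for every element x and every natural number n, (x^{2^n})⁻¹ = (x⁻¹)^{2^n}. -/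
namespace JordanLoop

variable {Q : Type*} [JordanLoop Q]

/-- cancellation on the right -/
lemma right_cancel (a z₁ z₂ : Q) (h₁ : z₁ * a = z₂ * a) : z₁ = z₂ := by
  obtain ⟨y, -, hy⟩ := exists_unique_right_div a (z₂ * a)
  exact (hy z₁ h₁).trans (hy z₂ rfl).symm

/-- `x² · x^k = x^(k+2)` -/
lemma sq_mul_jpow (x : Q) (k : ℕ) : (x * x) * jpow x k = jpow x (k + 2) := by
  induction k with
  | zero => simp [jpow, mul_one]
  | succ k ih =>
    calc (x * x) * jpow x (k + 1) = (x * x) * (jpow x k * x) := by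
          rw [jpow, mul_comm x (jpow x k)]
      _ = ((x * x) * jpow x k) * x := (jordan x (jpow x k)).symm
      _ = x * jpow x (k + 2) := by rw [ih, mul_comm]
      _ = jpow x (k + 1 + 2) := rfl

/-- `x^(2m) = (x²)^m` -/
lemma jpow_two_mul (x : Q) (m : ℕ) : jpow x (2 * m) = jpow (x * x) m := by
  induction m with
  | zero => rfl
  | succ m ih =>
    have : 2 * (m + 1) = 2 * m + 2 := by ring
    rw [this, ← sq_mul_jpow, ih]; rfl

/-- inverses square -/
lemma sq_inv (x xi : Q) (h : x * xi = 1) : (x * x) * (xi * xi) = 1 := by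
  have hx : xi * x = 1 := (mul_comm xi x).trans h
  have h1 : (x * x) * xi = x := by
    apply right_cancel x
    rw [jordan, hx, mul_one]
  have h2 : (xi * xi) * x = xi := by
    apply right_cancel xi
    rw [jordan, h, mul_one]
  apply right_cancel x
  calc ((x * x) * (xi * xi)) * x = (x * x) * ((xi * xi) * x) := jordan x (xi * xi)
    _ = x := by rw [h2, h1]
    _ = 1 * x := (one_mul x).symm

end JordanLoop

/-- In any Jordan loop, `(x^{2^n})⁻¹ = (x⁻¹)^{2^n}`: if `xi` is the inverse of
`x` (i.e. `x · xi = e`), then `xi^{2^n}` is the inverse of `x^{2^n}`. -/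
theorem inv_pow_two_pow {Q : Type*} [JordanLoop Q] (x xi : Q)
    (h : x * xi = 1) (n : ℕ) :
    jpow x (2 ^ n) * jpow xi (2 ^ n) = 1 := by
  induction n generalizing x xi with
  | zero => simpa [jpow, JordanLoop.mul_one] using h
  | succ n ih =>
    have hx : jpow x (2 ^ (n + 1)) = jpow (x * x) (2 ^ n) := by
      rw [pow_succ, mul_comm (2 ^ n) 2, JordanLoop.jpow_two_mul]
    have hxi : jpow xi (2 ^ (n + 1)) = jpow (xi * xi) (2 ^ n) := by
      rw [pow_succ, mul_comm (2 ^ n) 2, JordanLoop.jpow_two_mul]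
    rw [hx, hxi]
    exact ih _ _ (JordanLoop.sq_inv x xi h)
end

section
/- In any Jordan loop, the following identities hold for every element x, where x^{-k} denotes (x⁻¹)^k: (i) (x²)⁻¹ · x = x⁻¹; (ii) x³ · x^{-2} = x; (iii) x³ · x⁻¹ = x²; (iv) x⁴ · x^{-3} = x; (v) x⁶ · x^{-2} = x⁴; (vi) x⁶ · x^{-4} = x². -/
namespace JordanLoopAux

open JordanLoop

variable {Q : Type*} [JordanLoop Q]

/-- Left cancellation. -/
theorem mcl {a u v : Q} (h : a * u = a * v) : u = v := by
  obtain ⟨w, -, hw⟩ := exists_unique_left_div a (a * v)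
  exact (hw u h).trans (hw v rfl).symm

/-- Right cancellation. -/
theorem mcr {a u v : Q} (h : u * a = v * a) : u = v := by
  obtain ⟨w, -, hw⟩ := exists_unique_right_div a (v * a)
  exact (hw u h).trans (hw v rfl).symm

theorem L1 (a b : Q) (h : a * b = 1) : (a * a) * b = a := by
  apply mcr (a := a)
  rw [jordan, JordanLoop.mul_comm b a, h, JordanLoop.mul_one]

theorem L2 (a b : Q) (h : a * b = 1) : (a * a) * (b * b) = 1 := by
  have hba : b * a = 1 := by rw [JordanLoop.mul_comm]; exact h
  apply mcr (a := a)
  rw [jordan, L1 b a hba, L1 a b h, JordanLoop.one_mul]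

theorem L3 (a : Q) : a * (a * (a * a)) = (a * a) * (a * a) := by
  have j := jordan a a
  rw [JordanLoop.mul_comm (a * a) a] at j
  rw [JordanLoop.mul_comm (a * (a * a)) a] at j
  exact j

theorem L4 (a b : Q) (h : a * b = 1) :
    ((a * a) * (a * a)) * b = a * (a * a) := by
  apply mcr (a := a * a)
  rw [jordan (a * a) b, JordanLoop.mul_comm b (a * a), L1 a b h]
  rw [jordan a (a * a), JordanLoop.mul_comm (a * a) a,
    JordanLoop.mul_comm (a * a) (a * (a * a))]

theorem L6 (a b : Q) (h : a * b = 1) : (a * (a * a)) * (b * b) = a := by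
  have j := jordan b ((a * a) * (a * a))
  rw [L4 a b h, JordanLoop.mul_comm (b * b) ((a * a) * (a * a)),
    L1 (a * a) (b * b) (L2 a b h), L1 a b h] at j
  exact (JordanLoop.mul_comm _ _).trans j.symm

theorem L7 (a b : Q) (h : a * b = 1) : (a * (a * a)) * b = a * a := by
  apply mcl (a := b * b)
  have j := jordan b (a * (a * a))
  rw [← j, JordanLoop.mul_comm (b * b) (a * (a * a)), L6 a b h, h,
    JordanLoop.mul_comm (b * b) (a * a), L2 a b h]

theorem L8 (a b : Q) (h : a * b = 1) :
    ((a * a) * (a * a)) * (b * (b * b)) = a := by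
  have hba : b * a = 1 := by rw [JordanLoop.mul_comm]; exact h
  apply mcr (a := a * a)
  rw [jordan (a * a) (b * (b * b)), L6 b a hba]
  exact L4 a b h

theorem L9 (a : Q) :
    a * (a * (a * (a * (a * a)))) = (a * a) * ((a * a) * (a * a)) := by
  have h4 := L3 a
  have h5 : a * (a * (a * (a * a))) = (a * a) * (a * (a * a)) := by
    have j := jordan a (a * a)
    calc a * (a * (a * (a * a))) = a * ((a * a) * (a * a)) := by rw [h4]
      _ = ((a * a) * (a * a)) * a := JordanLoop.mul_comm _ _
      _ = (a * a) * ((a * a) * a) := j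
      _ = (a * a) * (a * (a * a)) := by rw [JordanLoop.mul_comm (a * a) a]
  have j := jordan a (a * (a * a))
  calc a * (a * (a * (a * (a * a))))
      = a * ((a * a) * (a * (a * a))) := by rw [h5]
    _ = ((a * a) * (a * (a * a))) * a := JordanLoop.mul_comm _ _
    _ = (a * a) * ((a * (a * a)) * a) := j
    _ = (a * a) * (a * (a * (a * a))) := by
        rw [JordanLoop.mul_comm (a * (a * a)) a]
    _ = (a * a) * ((a * a) * (a * a)) := by rw [h4]

end JordanLoopAux

open JordanLoopAux in
/-- Identities involving inverses in a Jordan loop. Here `xi = x⁻¹` is the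
unique element with `x · xi = e`, `x2i = (x²)⁻¹` the unique element with
`x² · x2i = e`, and `x^{-k}` is rendered as `jpow xi k`:
(i) `(x²)⁻¹ · x = x⁻¹`; (ii) `x³ · x⁻² = x`; (iii) `x³ · x⁻¹ = x²`;
(iv) `x⁴ · x⁻³ = x`; (v) `x⁶ · x⁻² = x⁴`; (vi) `x⁶ · x⁻⁴ = x²`. -/
theorem inverse_identities {Q : Type*} [JordanLoop Q] (x xi x2i : Q)
    (hx : x * xi = 1) (hx2 : jpow x 2 * x2i = 1) :
    x2i * x = xi ∧
    jpow x 3 * jpow xi 2 = x ∧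
    jpow x 3 * xi = jpow x 2 ∧
    jpow x 4 * jpow xi 3 = x ∧
    jpow x 6 * jpow xi 2 = jpow x 4 ∧
    jpow x 6 * jpow xi 4 = jpow x 2 := by
  have hxi : xi * x = 1 := by rw [JordanLoop.mul_comm]; exact hx
  have hx2' : (x * x) * x2i = 1 := by
    simpa [jpow, JordanLoop.mul_one] using hx2
  have h2 : (x * x) * (xi * xi) = 1 := L2 x xi hx
  refine ⟨?_, ?_, ?_, ?_, ?_, ?_⟩
  · have hx2i : x2i = xi * xi := mcl (a := x * x) (by rw [hx2', h2])
    rw [hx2i]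
    exact L1 xi x hxi
  · simpa [jpow, JordanLoop.mul_one] using L6 x xi hx
  · simpa [jpow, JordanLoop.mul_one] using L7 x xi hx
  · have h := L8 x xi hx
    rw [← L3 x] at h
    simpa [jpow, JordanLoop.mul_one] using h
  · have h := L7 (x * x) (xi * xi) h2
    rw [← L9 x, ← L3 x] at h
    simpa [jpow, JordanLoop.mul_one] using h
  · have h := L6 (x * x) (xi * xi) h2
    rw [← L9 x, ← L3 xi] at h
    simpa [jpow, JordanLoop.mul_one] using h
end

section
/- Let Q be a Jordan loop and x ∈ Q such that x³ · x³ = x⁶. Then x⁶, x⁷, and x⁸ are well-defined — concretely, x^i · x^j = x^{i+j} whenever i + j ∈ {6, 7, 8} — and moreover x⁶ · x⁻¹ = x⁵. -/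
private lemma JL.lcancel {Q : Type*} [JordanLoop Q] {a b c : Q}
    (h : a * b = a * c) : b = c := by
  obtain ⟨u, -, uniq⟩ := JordanLoop.exists_unique_left_div a (a * c)
  exact (uniq b h).trans (uniq c rfl).symm

private lemma JL.rcancel {Q : Type*} [JordanLoop Q] {a b c : Q}
    (h : b * a = c * a) : b = c := by
  obtain ⟨u, -, uniq⟩ := JordanLoop.exists_unique_right_div a (c * a)
  exact (uniq b h).trans (uniq c rfl).symm

private lemma JL.ge_one {Q : Type*} [Mul Q] {x : Q} {n : ℕ} {a : Q}
    (h : IsProductOf x n a) : 1 ≤ n := by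
  induction h with
  | single => exact le_refl 1
  | mul h1 h2 ih1 ih2 => omega

/-- If `x³ · x³ = x⁶` in a Jordan loop, then `x⁶`, `x⁷`, `x⁸` are
well-defined — every parenthesization of 6, 7, or 8 copies of `x` yields
`x⁶`, `x⁷`, `x⁸`, and concretely `x^i · x^j = x^{i+j}` whenever
`i + j ∈ {6, 7, 8}` — and moreover `x⁶ · x⁻¹ = x⁵` (where `x⁻¹` is the
unique element with `x · x⁻¹ = e`). -/
theorem powers_well_defined_of_six {Q : Type*} [JordanLoop Q] (x : Q)
    (h6 : jpow x 3 * jpow x 3 = jpow x 6) :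
    (∀ a : Q, IsProductOf x 6 a → a = jpow x 6) ∧
    (∀ a : Q, IsProductOf x 7 a → a = jpow x 7) ∧
    (∀ a : Q, IsProductOf x 8 a → a = jpow x 8) ∧
    (∀ i j : ℕ, (i + j = 6 ∨ i + j = 7 ∨ i + j = 8) →
      jpow x i * jpow x j = jpow x (i + j)) ∧
    (∀ xi : Q, x * xi = 1 → jpow x 6 * xi = jpow x 5) := by
  have C : ∀ a b : Q, a * b = b * a := JordanLoop.mul_comm
  have J : ∀ a y : Q, ((a * a) * y) * a = (a * a) * (y * a) := JordanLoop.jordan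
  have e1 : jpow x 1 = x := JordanLoop.mul_one x
  have e2 : jpow x 2 = x * x := by
    show x * jpow x 1 = x * x
    rw [e1]
  -- L_x and L_{x²} commute
  have lx : ∀ y : Q, x * (jpow x 2 * y) = jpow x 2 * (x * y) := by
    intro y
    have h := J x y
    rw [← e2] at h
    calc x * (jpow x 2 * y) = (jpow x 2 * y) * x := C _ _
      _ = jpow x 2 * (y * x) := h
      _ = jpow x 2 * (x * y) := by rw [C y x]
  have m2x : jpow x 2 * x = jpow x 3 := by rw [C (jpow x 2) x]; rfl
  have m22 : jpow x 2 * jpow x 2 = jpow x 4 := by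
    have h := J x x
    rw [← e2, m2x, C (jpow x 3) x] at h
    exact h.symm
  have m23 : jpow x 2 * jpow x 3 = jpow x 5 := by
    calc jpow x 2 * jpow x 3 = jpow x 2 * (x * jpow x 2) := rfl
      _ = x * (jpow x 2 * jpow x 2) := (lx _).symm
      _ = x * jpow x 4 := by rw [m22]
      _ = jpow x 5 := rfl
  have m24 : jpow x 2 * jpow x 4 = jpow x 6 := by
    calc jpow x 2 * jpow x 4 = jpow x 2 * (x * jpow x 3) := rfl
      _ = x * (jpow x 2 * jpow x 3) := (lx _).symm
      _ = x * jpow x 5 := by rw [m23]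
      _ = jpow x 6 := rfl
  have m25 : jpow x 2 * jpow x 5 = jpow x 7 := by
    calc jpow x 2 * jpow x 5 = jpow x 2 * (x * jpow x 4) := rfl
      _ = x * (jpow x 2 * jpow x 4) := (lx _).symm
      _ = x * jpow x 6 := by rw [m24]
      _ = jpow x 7 := rfl
  have m26 : jpow x 2 * jpow x 6 = jpow x 8 := by
    calc jpow x 2 * jpow x 6 = jpow x 2 * (x * jpow x 5) := rfl
      _ = x * (jpow x 2 * jpow x 5) := (lx _).symm
      _ = x * jpow x 7 := by rw [m25]
      _ = jpow x 8 := rfl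
  -- L_{x²} and L_{x⁴} commute
  have lp2 : ∀ y : Q, jpow x 2 * (jpow x 4 * y) = jpow x 4 * (jpow x 2 * y) := by
    intro y
    have h := J (jpow x 2) y
    rw [m22] at h
    calc jpow x 2 * (jpow x 4 * y) = (jpow x 4 * y) * jpow x 2 := C _ _
      _ = jpow x 4 * (y * jpow x 2) := h
      _ = jpow x 4 * (jpow x 2 * y) := by rw [C y (jpow x 2)]
  have m4x : jpow x 4 * x = jpow x 5 := by rw [C (jpow x 4) x]; rfl
  have m43 : jpow x 4 * jpow x 3 = jpow x 7 := by
    have h := lp2 x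
    rw [m4x, m2x, m25] at h
    exact h.symm
  have m44 : jpow x 4 * jpow x 4 = jpow x 8 := by
    have h := lp2 (jpow x 2)
    rw [C (jpow x 4) (jpow x 2), m24, m26, m22] at h
    exact h.symm
  -- the inverse chain: for any xi with x * xi = 1 we get both goals
  have key5 : ∀ xi : Q, x * xi = 1 →
      jpow x 6 * xi = jpow x 5 ∧ jpow x 3 * jpow x 5 = jpow x 8 := by
    intro xi hxi
    obtain ⟨d, hd, -⟩ := JordanLoop.exists_unique_left_div (jpow x 2) 1
    -- p2 * xi = x
    have h := J x xi
    rw [← e2, C xi x, hxi, JordanLoop.mul_one] at h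
    have m2xi : jpow x 2 * xi = x := JL.rcancel (h.trans e2)
    -- p4 * xi = p3
    have h := lp2 xi
    rw [m2xi, m4x] at h
    have m4xi : jpow x 4 * xi = jpow x 3 := JL.lcancel (h.trans m23.symm)
    -- x * d = xi
    have h := lx d
    rw [hd, JordanLoop.mul_one] at h
    have mxd : x * d = xi := (JL.lcancel (m2xi.trans h)).symm
    -- p4 * d = p2
    have h := lp2 d
    rw [hd, JordanLoop.mul_one] at h
    have m4d : jpow x 4 * d = jpow x 2 := JL.lcancel (h.trans m22.symm)
    -- xi * xi = d
    have h := J xi x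
    rw [hxi, JordanLoop.mul_one] at h
    have hwx : (xi * xi) * x = xi := JL.rcancel h
    have wd : xi * xi = d := by
      have h2 : x * (xi * xi) = x * d := by rw [C x (xi * xi), hwx, mxd]
      exact JL.lcancel h2
    -- L_xi and L_d commute
    have lxid : ∀ y : Q, xi * (d * y) = d * (xi * y) := by
      intro y
      have h := J xi y
      rw [wd] at h
      calc xi * (d * y) = (d * y) * xi := C _ _
        _ = d * (y * xi) := h
        _ = d * (xi * y) := by rw [C y xi]
    -- d * p3 = x
    have h := lxid (jpow x 4)
    rw [C d (jpow x 4), m4d, C xi (jpow x 4), m4xi, C xi (jpow x 2), m2xi] at h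
    have md3 : d * jpow x 3 = x := h.symm
    -- p3 * xi = p2
    have h := J xi (jpow x 3)
    rw [wd, md3, hxi] at h
    have hdp2 : d * jpow x 2 = 1 := (C d (jpow x 2)).trans hd
    have m3xi : jpow x 3 * xi = jpow x 2 := JL.lcancel (h.symm.trans hdp2.symm)
    -- L_d and L_{d·d} commute
    have ldf : ∀ y : Q, d * ((d * d) * y) = (d * d) * (d * y) := by
      intro y
      have h := J d y
      calc d * ((d * d) * y) = ((d * d) * y) * d := C _ _
        _ = (d * d) * (y * d) := h
        _ = (d * d) * (d * y) := by rw [C y d]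
    -- (d·d) * p2 = d
    have h := J d (jpow x 2)
    rw [hd, JordanLoop.mul_one] at h
    have mf2 : (d * d) * jpow x 2 = d := JL.rcancel h
    -- (d·d) * p4 = 1
    have h := J d (jpow x 4)
    rw [m4d, mf2] at h
    have mf4 : (d * d) * jpow x 4 = 1 :=
      JL.rcancel (h.trans (JordanLoop.one_mul d).symm)
    -- (d·d) * x = xi * d
    have h1 : d * ((d * d) * x) = (d * d) * xi := by
      have h := ldf x
      rw [C d x, mxd] at h
      exact h
    have h2 : d * (xi * d) = (d * d) * xi := by
      have h := lxid d
      exact h.symm.trans (C xi (d * d))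
    have fx : (d * d) * x = xi * d := JL.lcancel (h1.trans h2.symm)
    -- (d·d) * p3 = xi
    have h := J d (jpow x 3)
    rw [C (jpow x 3) d, md3, fx] at h
    have mf3 : (d * d) * jpow x 3 = xi := JL.rcancel h
    -- p6 * d = p4
    have h := J (jpow x 3) d
    rw [h6, md3] at h
    have m6x : jpow x 6 * x = jpow x 7 := by rw [C (jpow x 6) x]; rfl
    rw [m6x, ← m43] at h
    have m6d : jpow x 6 * d = jpow x 4 := JL.rcancel h
    -- (d·d) * p6 = p2
    have h := J d (jpow x 6)
    rw [m6d, mf4] at h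
    have mf6 : (d * d) * jpow x 6 = jpow x 2 := JL.rcancel (h.trans hd.symm)
    -- GOAL B : p6 * xi = p5
    have h := J (jpow x 3) (d * d)
    rw [h6, mf3, C (jpow x 6) (d * d), mf6, m23] at h
    have goalB : jpow x 6 * xi = jpow x 5 := h.symm
    -- GOAL A : p3 * p5 = p8
    have h := J (jpow x 3) xi
    rw [h6, goalB, C xi (jpow x 3), m3xi, C (jpow x 5) (jpow x 3),
      C (jpow x 6) (jpow x 2), m26] at h
    exact ⟨goalB, h⟩
  obtain ⟨xi0, hxi0, -⟩ := JordanLoop.exists_unique_left_div x 1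
  have m35 : jpow x 3 * jpow x 5 = jpow x 8 := (key5 xi0 hxi0).2
  -- flipped versions
  have m1 : ∀ k : ℕ, jpow x 1 * jpow x k = jpow x (k + 1) := by
    intro k; rw [e1]; rfl
  have m1' : ∀ k : ℕ, jpow x k * jpow x 1 = jpow x (k + 1) := by
    intro k; rw [C (jpow x k) (jpow x 1)]; exact m1 k
  have m32 : jpow x 3 * jpow x 2 = jpow x 5 := (C _ _).trans m23
  have m42 : jpow x 4 * jpow x 2 = jpow x 6 := (C _ _).trans m24
  have m52 : jpow x 5 * jpow x 2 = jpow x 7 := (C _ _).trans m25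
  have m62 : jpow x 6 * jpow x 2 = jpow x 8 := (C _ _).trans m26
  have m34 : jpow x 3 * jpow x 4 = jpow x 7 := (C _ _).trans m43
  have m53 : jpow x 5 * jpow x 3 = jpow x 8 := (C _ _).trans m35
  have master : ∀ i j : ℕ, i + j ≤ 8 → jpow x i * jpow x j = jpow x (i + j) := by
    intro i j hij
    have hi : i ≤ 8 := by omega
    have hj : j ≤ 8 := by omega
    interval_cases i <;> interval_cases j <;>
      first
        | (exfalso; omega)
        | exact JordanLoop.one_mul _
        | exact JordanLoop.mul_one _
        | exact m1 _
        | exact m1' _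
        | exact m22
        | exact m23
        | exact m24
        | exact m25
        | exact m26
        | exact m32
        | exact m42
        | exact m52
        | exact m62
        | exact h6
        | exact m34
        | exact m43
        | exact m35
        | exact m53
        | exact m44
  have key : ∀ {n : ℕ} {a : Q}, IsProductOf x n a → n ≤ 8 → a = jpow x n := by
    intro n a h
    induction h with
    | single => intro _; exact e1.symm
    | @mul m k a b h1 h2 ih1 ih2 =>
      intro hle
      have hm := JL.ge_one h1
      have hk := JL.ge_one h2
      rw [ih1 (by omega), ih2 (by omega)]
      exact master m k hle
  exact ⟨fun a ha => key ha (by norm_num),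
    fun a ha => key ha (by norm_num),
    fun a ha => key ha (by norm_num),
    fun i j hij => master i j (by omega),
    fun xi hxi => (key5 xi hxi).1⟩
end

section
/- Let Q be a finite commutative loop of order n. Then Q has a subloop of even order if and only if n is even. Here a subloop is a subset H containing e, closed under multiplication, and such that for all a, b ∈ H the unique solutions x, y ∈ Q of a·x = b and y·a = b lie in H. -/
/-- A commutative loop: a set with multiplication and identity element such
that the equations `a * x = b` and `y * a = b` have unique solutions and the
multiplication is commutative. -/
class CommLoop (Q : Type*) extends Mul Q, One Q where
  one_mul : ∀ x : Q, 1 * x = x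
  mul_one : ∀ x : Q, x * 1 = x
  exists_unique_left_div : ∀ a b : Q, ∃! x : Q, a * x = b
  exists_unique_right_div : ∀ a b : Q, ∃! y : Q, y * a = b
  mul_comm : ∀ x y : Q, x * y = y * x

/-- `H` is a subloop: it contains `e`, is closed under multiplication, and
the unique solutions in `Q` of `a · x = b` and `y · a = b` for `a, b ∈ H`
lie in `H`. -/
def IsSubloop {Q : Type*} [CommLoop Q] (H : Set Q) : Prop :=
  (1 : Q) ∈ H ∧ (∀ a ∈ H, ∀ b ∈ H, a * b ∈ H) ∧
    (∀ a ∈ H, ∀ b ∈ H, ∀ z : Q, a * z = b → z ∈ H) ∧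
    (∀ a ∈ H, ∀ b ∈ H, ∀ z : Q, z * a = b → z ∈ H)

section Aux
variable {Q : Type*} [CommLoop Q]

noncomputable def cldiv (x c : Q) : Q :=
  (CommLoop.exists_unique_left_div x c).exists.choose

lemma mul_cldiv (x c : Q) : x * cldiv x c = c :=
  (CommLoop.exists_unique_left_div x c).exists.choose_spec

lemma cldiv_eq_of {x y c : Q} (h : x * y = c) : cldiv x c = y :=
  (CommLoop.exists_unique_left_div x c).unique (mul_cldiv x c) h

lemma cldiv_invol (c : Q) : Function.Involutive (fun x : Q => cldiv x c) := by
  intro x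
  exact cldiv_eq_of (by rw [CommLoop.mul_comm]; exact mul_cldiv x c)

/-- Key parity lemma: the number of square roots of `c` in `H` is congruent to
`|H|` mod 2, provided `H` is closed under left division into `c`. -/
lemma key [Fintype Q] (H : Set Q) (c : Q) (_hc : c ∈ H)
    (hclose : ∀ a ∈ H, ∀ z : Q, a * z = c → z ∈ H) :
    {x ∈ H | x * x = c}.ncard ≡ H.ncard [MOD 2] := by
  classical
  haveI : Fact (Nat.Prime 2) := ⟨Nat.prime_two⟩
  set σ : Function.End ↥H := fun x => ⟨cldiv x.1 c, hclose x.1 x.2 _ (mul_cldiv x.1 c)⟩ with hσdef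
  have hσσ : ∀ x, σ (σ x) = x := by
    intro x
    apply Subtype.ext
    exact cldiv_invol c x.1
  have hf : σ ^ (2:ℕ) ^ (1:ℕ) = 1 := by
    funext x
    show σ (σ ((1 : Function.End ↥H) x)) = x
    exact hσσ _
  have hmod := Equiv.Perm.card_fixedPoints_modEq (p := 2) (n := 1) hf
  have e1 : Fintype.card σ.fixedPoints = {x ∈ H | x * x = c}.ncard := by
    rw [← Nat.card_coe_set_eq, ← Nat.card_eq_fintype_card]
    apply Nat.card_congr
    refine ⟨fun x => ⟨x.1.1, x.1.2, ?_⟩, fun x => ⟨⟨x.1, x.2.1⟩, Subtype.ext (cldiv_eq_of x.2.2)⟩,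
      fun x => rfl, fun x => rfl⟩
    have hx : cldiv x.1.1 c = x.1.1 := congrArg Subtype.val x.2
    calc x.1.1 * x.1.1 = x.1.1 * cldiv x.1.1 c := by rw [hx]
      _ = c := mul_cldiv _ _
  have e2 : Fintype.card ↥H = H.ncard := by
    rw [← Nat.card_coe_set_eq, Nat.card_eq_fintype_card]
  rw [← e1, ← e2]
  exact hmod.symm
end Aux

/-- A finite commutative loop of order `n` has a subloop of even order if and
only if `n` is even. -/
theorem exists_even_subloop_iff_even {Q : Type*} [CommLoop Q] [Fintype Q]
    (n : ℕ) (hn : Fintype.card Q = n) :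
    (∃ H : Set Q, IsSubloop H ∧ Even H.ncard) ↔ Even n := by
  classical
  constructor
  · rintro ⟨H, ⟨h1, hm, hld, hrd⟩, hev⟩
    by_contra hodd
    rw [Nat.not_even_iff_odd] at hodd
    have hsurj : Function.Surjective (fun x : Q => x * x) := by
      intro c
      have hk := key (Set.univ : Set Q) c (Set.mem_univ c) (fun a _ z _ => Set.mem_univ z)
      rw [Set.ncard_univ, Nat.card_eq_fintype_card, hn] at hk
      have hne : {x ∈ (Set.univ : Set Q) | x * x = c}.ncard ≠ 0 := by
        intro h0
        rw [h0] at hk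
        rw [Nat.ModEq, Nat.zero_mod] at hk
        rw [Nat.odd_iff] at hodd
        omega
      obtain ⟨x, -, hx⟩ := Set.nonempty_of_ncard_ne_zero hne
      exact ⟨x, hx⟩
    have hinj : Function.Injective (fun x : Q => x * x) :=
      Finite.injective_iff_surjective.mpr hsurj
    have hk := key H 1 h1 (fun a ha z hz => hld a ha 1 h1 z hz)
    have hset : {x ∈ H | x * x = 1} = {(1 : Q)} := by
      ext x
      constructor
      · rintro ⟨-, hx⟩
        have : x * x = 1 * 1 := by rw [hx, CommLoop.mul_one]
        exact hinj this
      · rintro rfl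
        exact ⟨h1, CommLoop.mul_one 1⟩
    rw [hset, Set.ncard_singleton] at hk
    rw [Nat.even_iff] at hev
    rw [Nat.ModEq] at hk
    omega
  · intro hev
    refine ⟨Set.univ, ⟨Set.mem_univ _, fun a _ b _ => Set.mem_univ _,
      fun a _ b _ z _ => Set.mem_univ _, fun a _ b _ z _ => Set.mem_univ _⟩, ?_⟩
    rw [Set.ncard_univ, Nat.card_eq_fintype_card, hn]
    exact hev
end

section
/- Let Q be a finite quasigroup and H a proper subquasigroup of Q (a nonempty subset H ≠ Q closed under multiplication and such that for all a, b ∈ H the unique solutions x, y ∈ Q of a·x = b and y·a = b lie in H). Then |H| ≤ ⌊|Q|/2⌋. -/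
/-- A quasigroup: a set with multiplication such that the equations
`a * x = b` and `y * a = b` have unique solutions. -/
class Quasigroup (Q : Type*) extends Mul Q where
  exists_unique_left_div : ∀ a b : Q, ∃! x : Q, a * x = b
  exists_unique_right_div : ∀ a b : Q, ∃! y : Q, y * a = b

/-- If `H` is a proper subquasigroup of a finite quasigroup `Q` (nonempty,
not all of `Q`, closed under multiplication and under the two divisions of
`Q`), then `|H| ≤ ⌊|Q|/2⌋`. -/
theorem subquasigroup_card_le {Q : Type*} [Quasigroup Q] [Fintype Q]
    (H : Set Q) (hne : H.Nonempty) (hproper : H ≠ Set.univ)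
    (hmul : ∀ a ∈ H, ∀ b ∈ H, a * b ∈ H)
    (hldiv : ∀ a ∈ H, ∀ b ∈ H, ∀ z : Q, a * z = b → z ∈ H)
    (hrdiv : ∀ a ∈ H, ∀ b ∈ H, ∀ z : Q, z * a = b → z ∈ H) :
    H.ncard ≤ Fintype.card Q / 2 := by
  obtain ⟨c, hc⟩ : ∃ c, c ∉ H := by
    by_contra h
    push_neg at h
    exact hproper (Set.eq_univ_of_forall h)
  have hmaps : ∀ h ∈ H, h * c ∈ Hᶜ := by
    intro h hh hmem
    exact hc (hldiv h hh (h * c) hmem c rfl)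
  have hinj : Set.InjOn (fun h => h * c) H := by
    intro x hx y hy hxy
    obtain ⟨z, _, huniq⟩ := Quasigroup.exists_unique_right_div c (x * c)
    exact (huniq x rfl).trans (huniq y hxy.symm).symm
  have hle : H.ncard ≤ Hᶜ.ncard :=
    Set.ncard_le_ncard_of_injOn _ hmaps hinj (Set.toFinite _)
  have hsum : H.ncard + Hᶜ.ncard = Fintype.card Q := by
    rw [Set.ncard_add_ncard_compl H]; exact Nat.card_eq_fintype_card
  omega
end

section
/- Let Q be a Jordan loop of order 9 that is generated by a single element x (i.e., ⟨x⟩ = Q). Then Q = {x^k : 0 ≤ k ≤ 8}, where x^k is the right-associated power, and x^n = x^{(n mod 9)} for all natural numbers n. -/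
/-- `H` is closed as a subloop: it contains `e`, is closed under
multiplication, and the unique solutions in `Q` of `a * z = b` and
`z * a = b` for `a, b ∈ H` lie in `H`. -/
def SubloopClosed {Q : Type*} [JordanLoop Q] (H : Set Q) : Prop :=
  (1 : Q) ∈ H ∧ (∀ a ∈ H, ∀ b ∈ H, a * b ∈ H) ∧
    (∀ a ∈ H, ∀ b ∈ H, ∀ z : Q, a * z = b → z ∈ H) ∧
    (∀ a ∈ H, ∀ b ∈ H, ∀ z : Q, z * a = b → z ∈ H)

/-- The subloop `⟨x⟩` generated by `x`: the smallest subset of `Q` containing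
`x` and `e` that is closed under multiplication and the two divisions. -/
def genSubloop {Q : Type*} [JordanLoop Q] (x : Q) : Set Q :=
  ⋂₀ {H : Set Q | x ∈ H ∧ SubloopClosed H}

section JLAux

variable {Q : Type*} [JordanLoop Q]

lemma jl_comm (a b : Q) : a * b = b * a := JordanLoop.mul_comm a b
lemma jl_mone (a : Q) : a * 1 = a := JordanLoop.mul_one a
lemma jl_omul (a : Q) : 1 * a = a := JordanLoop.one_mul a

lemma jl_left_cancel {a b c : Q} (h : a * b = a * c) : b = c := by
  obtain ⟨z, _, hu⟩ := JordanLoop.exists_unique_left_div a (a * c)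
  rw [hu b h, hu c rfl]

lemma jl_right_unique {a b y z : Q} (hy : y * a = b) (hz : z * a = b) : y = z := by
  obtain ⟨w, _, hu⟩ := JordanLoop.exists_unique_right_div a b
  rw [hu y hy, hu z hz]

lemma jpow_succ' (x : Q) (n : ℕ) : jpow x (n + 1) = x * jpow x n := rfl
lemma jpow_zero' (x : Q) : jpow x 0 = 1 := rfl
lemma jpow_one' (x : Q) : jpow x 1 = x := jl_mone x
lemma jpow_two' (x : Q) : jpow x 2 = x * x := by
  rw [show (2:ℕ) = 1 + 1 from rfl, jpow_succ', jpow_one']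

lemma jJ1 (x : Q) (n : ℕ) : (x * x) * jpow x n = jpow x (n + 2) := by
  induction n with
  | zero => rw [jpow_zero', jl_mone]; exact (jpow_two' x).symm
  | succ n ih =>
    have hj := JordanLoop.jordan x (jpow x n)
    rw [ih, jl_comm (jpow x n) x, ← jpow_succ'] at hj
    rw [← hj, jl_comm (jpow x (n + 2)) x, ← jpow_succ']

lemma jJ2 (x : Q) (n : ℕ) : jpow x 2 * jpow x n = jpow x (n + 2) := by
  rw [jpow_two']; exact jJ1 x n

lemma jpow_cancel (x : Q) : ∀ k m n : ℕ, jpow x (k + m) = jpow x (k + n) → jpow x m = jpow x n := by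
  intro k
  induction k with
  | zero => intro m n h; simpa using h
  | succ k ih =>
    intro m n h
    apply ih
    apply jl_left_cancel (a := x)
    rw [← jpow_succ', ← jpow_succ']
    have e1 : k + m + 1 = k + 1 + m := by omega
    have e2 : k + n + 1 = k + 1 + n := by omega
    rw [e1, e2]; exact h

lemma jl_exists_period [Fintype Q] (x : Q) : ∃ d : ℕ, 0 < d ∧ jpow x d = 1 := by
  obtain ⟨i, j, hne, hij⟩ := Finite.exists_ne_map_eq_of_infinite (jpow x)
  rcases Nat.lt_or_ge i j with h | h
  · refine ⟨j - i, by omega, ?_⟩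
    have h2 := jpow_cancel x i 0 (j - i) ?_
    · simpa [jpow_zero'] using h2.symm
    · rw [show i + (j - i) = j from by omega, show i + 0 = i from rfl]; exact hij
  · have hlt : j < i := by omega
    refine ⟨i - j, by omega, ?_⟩
    have h2 := jpow_cancel x j 0 (i - j) ?_
    · simpa [jpow_zero'] using h2.symm
    · rw [show j + (i - j) = i from by omega, show j + 0 = j from rfl]; exact hij.symm

lemma jl_add_period {x : Q} {d : ℕ} (hd : jpow x d = 1) (n : ℕ) :
    jpow x (n + d) = jpow x n := by
  induction n with
  | zero => rw [Nat.zero_add, hd]; rfl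
  | succ n ih =>
    have e : n + 1 + d = (n + d) + 1 := by omega
    rw [e, jpow_succ', ih, jpow_succ']

lemma jl_mod {x : Q} {d : ℕ} (hpos : 0 < d) (hd : jpow x d = 1) :
    ∀ n, jpow x n = jpow x (n % d) := by
  intro n
  induction n using Nat.strong_induction_on with
  | _ n ih =>
    rcases Nat.lt_or_ge n d with h | h
    · rw [Nat.mod_eq_of_lt h]
    · have h1 : jpow x n = jpow x (n - d) := by
        conv_lhs => rw [show n = (n - d) + d from by omega]
        exact jl_add_period hd (n - d)
      rw [h1, ih (n - d) (by omega), Nat.mod_eq_sub_mod h]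

lemma jl_inj {x : Q} {d : ℕ}
    (hmin : ∀ m, 0 < m → m < d → jpow x m ≠ 1) :
    ∀ i, i < d → ∀ j, j < d → jpow x i = jpow x j → i = j := by
  have key : ∀ i j, i ≤ j → j < d → jpow x i = jpow x j → i = j := by
    intro i j hij hjd h
    have h2 := jpow_cancel x i 0 (j - i) ?_
    · by_contra hne
      exact hmin (j - i) (by omega) (by omega) (by simpa [jpow_zero'] using h2.symm)
    · rw [show i + 0 = i from rfl, show i + (j - i) = j from by omega]; exact h
  intro i hi j hj h
  rcases le_or_gt i j with hle | hlt
  · exact key i j hle hj h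
  · exact (key j i (by omega) hi h.symm).symm

lemma even_card_invol {α : Type*} [DecidableEq α] (f : α → α) :
    ∀ (n : ℕ) (s : Finset α), s.card = n → (∀ a ∈ s, f a ∈ s) →
      (∀ a ∈ s, f (f a) = a) → (∀ a ∈ s, f a ≠ a) → Even n := by
  intro n
  induction n using Nat.strong_induction_on with
  | _ n ih =>
    intro s hcard hmem hinv hne
    rcases Finset.eq_empty_or_nonempty s with rfl | ⟨a, ha⟩
    · simp only [Finset.card_empty] at hcard; exact hcard ▸ Even.zero
    · have hfa : f a ∈ s := hmem a ha
      have hne_a : f a ≠ a := hne a ha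
      have hsub : ({a, f a} : Finset α) ⊆ s := by
        intro b hb
        rcases Finset.mem_insert.mp hb with rfl | hb
        · exact ha
        · rw [Finset.mem_singleton] at hb; exact hb ▸ hfa
      have hpair : ({a, f a} : Finset α).card = 2 := Finset.card_pair (Ne.symm hne_a)
      have hn2 : 2 ≤ n := by
        have hle := Finset.card_le_card hsub
        rw [hpair, hcard] at hle; exact hle
      have hct : (s \ {a, f a}).card = n - 2 := by
        rw [Finset.card_sdiff_of_subset hsub, hpair, hcard]
      have hmem' : ∀ b ∈ s \ {a, f a}, f b ∈ s \ {a, f a} := by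
        intro b hb
        rw [Finset.mem_sdiff] at hb ⊢
        obtain ⟨hbs, hbn⟩ := hb
        simp only [Finset.mem_insert, Finset.mem_singleton] at hbn ⊢
        push_neg at hbn ⊢
        refine ⟨hmem b hbs, ?_, ?_⟩
        · intro hfb
          exact hbn.2 (by rw [← hinv b hbs, hfb])
        · intro hfb
          exact hbn.1 (by rw [← hinv b hbs, hfb, hinv a ha])
      have hinv' : ∀ b ∈ s \ {a, f a}, f (f b) = b :=
        fun b hb => hinv b (Finset.mem_sdiff.mp hb).1
      have hne' : ∀ b ∈ s \ {a, f a}, f b ≠ b :=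
        fun b hb => hne b (Finset.mem_sdiff.mp hb).1
      have heven := ih (n - 2) (by omega) (s \ {a, f a}) hct hmem' hinv' hne'
      rw [Nat.even_iff] at heven ⊢; omega

lemma jl_sq_surj [Fintype Q] (h9 : Fintype.card Q = 9) (b : Q) :
    ∃ y : Q, y * y = b := by
  classical
  by_contra hcon
  push_neg at hcon
  have hex : ∀ y : Q, ∃ z, y * z = b := fun y =>
    (JordanLoop.exists_unique_left_div y b).exists
  set f : Q → Q := fun y => Classical.choose (hex y) with hf
  have hfs : ∀ y : Q, y * f y = b := fun y => Classical.choose_spec (hex y)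
  have hinv : ∀ y : Q, f (f y) = y := by
    intro y
    have h1 : f y * f (f y) = b := hfs (f y)
    have h2 : f y * y = b := by rw [jl_comm]; exact hfs y
    exact jl_left_cancel (h1.trans h2.symm)
  have hne : ∀ y : Q, f y ≠ y := by
    intro y hy
    have h1 := hfs y
    rw [hy] at h1
    exact hcon y h1
  have heven := even_card_invol f (Fintype.card Q) Finset.univ Finset.card_univ
    (fun a _ => Finset.mem_univ _) (fun a _ => hinv a) (fun a _ => hne a)
  rw [h9] at heven
  exact (by decide : ¬ Even 9) heven

lemma jl_sq_inj [Fintype Q] (h9 : Fintype.card Q = 9) {y z : Q}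
    (h : y * y = z * z) : y = z := by
  have hsurj : Function.Surjective (fun w : Q => w * w) := fun b => jl_sq_surj h9 b
  have hinj : Function.Injective (fun w : Q => w * w) :=
    Finite.injective_iff_surjective.mpr hsurj
  exact hinj h

lemma jl_c4 (x : Q) (n : ℕ) : jpow x 4 * jpow x n = jpow x (n + 4) := by
  have h24 : ∀ y : Q, jpow x 2 * (jpow x 4 * y) = jpow x 4 * (jpow x 2 * y) := by
    intro y
    have hj := JordanLoop.jordan (jpow x 2) y
    have h22 : jpow x 2 * jpow x 2 = jpow x 4 := jJ2 x 2
    rw [h22, jl_comm (jpow x 4 * y) (jpow x 2), jl_comm y (jpow x 2)] at hj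
    exact hj
  have main : ∀ m : ℕ, jpow x 4 * jpow x m = jpow x (m + 4) ∧
      jpow x 4 * jpow x (m + 1) = jpow x (m + 5) := by
    intro m
    induction m with
    | zero =>
      constructor
      · rw [jpow_zero', jl_mone, Nat.zero_add]
      · rw [Nat.zero_add, jpow_one', jl_comm (jpow x 4) x, ← jpow_succ']
    | succ m ih =>
      refine ⟨ih.2, ?_⟩
      have h1 : jpow x (m + 1 + 1) = jpow x 2 * jpow x m := (jJ2 x m).symm
      rw [h1, ← h24 (jpow x m), ih.1, jJ2]
  exact (main n).1

end JLAux

section JLAux2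
variable {Q : Type*} [JordanLoop Q]

lemma jl_card_le_of_hmul [Fintype Q] {x : Q} {d : ℕ} (hdpos : 0 < d)
    (hper : ∀ n, jpow x n = jpow x (n % d))
    (hmul : ∀ m n, jpow x m * jpow x n = jpow x (m + n))
    (hx : genSubloop x = Set.univ) :
    Fintype.card Q ≤ d := by
  set P : Set Q := Set.range (jpow x) with hP
  have hldiv : ∀ a ∈ P, ∀ b ∈ P, ∀ z : Q, a * z = b → z ∈ P := by
    rintro a ⟨m, rfl⟩ b ⟨n, rfl⟩ z hz
    have hm : m ≤ m * d := Nat.le_mul_of_pos_right m hdpos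
    have key : jpow x m * jpow x (n + m * d - m) = jpow x n := by
      rw [hmul]
      have e : m + (n + m * d - m) = n + m * d := by omega
      rw [e, hper (n + m * d), Nat.add_mul_mod_self_right, ← hper]
    exact ⟨n + m * d - m, (jl_left_cancel (key.trans hz.symm))⟩
  have hclosed : SubloopClosed P := by
    refine ⟨⟨0, rfl⟩, ?_, hldiv, ?_⟩
    · rintro a ⟨m, rfl⟩ b ⟨n, rfl⟩
      exact ⟨m + n, (hmul m n).symm⟩
    · intro a ha b hb z hz
      exact hldiv a ha b hb z (by rw [jl_comm]; exact hz)
  have hxP : x ∈ P := ⟨1, jpow_one' x⟩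
  have hsub : (Set.univ : Set Q) ⊆ P := hx ▸ Set.sInter_subset_of_mem ⟨hxP, hclosed⟩
  have hsurj : Function.Surjective (fun k : Fin d => jpow x k) := by
    intro y
    obtain ⟨k, hk⟩ := hsub (Set.mem_univ y)
    exact ⟨⟨k % d, Nat.mod_lt _ hdpos⟩, by show jpow x (k % d) = y; rw [← hper k]; exact hk⟩
  calc Fintype.card Q ≤ Fintype.card (Fin d) := Fintype.card_le_of_surjective _ hsurj
    _ = d := Fintype.card_fin d

end JLAux2
/-- If a Jordan loop of order 9 is generated by a single element `x`, then
`Q = {x^k : 0 ≤ k ≤ 8}` and `x^n = x^{n mod 9}` for all `n`. -/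
theorem jordan_loop_order_nine_monogenic_powers {Q : Type*} [JordanLoop Q]
    [Fintype Q] (h9 : Fintype.card Q = 9) (x : Q)
    (hx : genSubloop x = Set.univ) :
    (∀ y : Q, ∃ k : ℕ, k ≤ 8 ∧ jpow x k = y) ∧
    (∀ n : ℕ, jpow x n = jpow x (n % 9)) := by
  classical
  have hex : ∃ d : ℕ, 0 < d ∧ jpow x d = 1 := jl_exists_period x
  obtain ⟨d, hdpos, hd1, hmin⟩ :
      ∃ d : ℕ, 0 < d ∧ jpow x d = 1 ∧ ∀ m, 0 < m → m < d → jpow x m ≠ 1 := by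
    refine ⟨Nat.find hex, (Nat.find_spec hex).1, (Nat.find_spec hex).2, ?_⟩
    intro m hm hmlt h1
    exact Nat.find_min hex hmlt ⟨hm, h1⟩
  have hper : ∀ n, jpow x n = jpow x (n % d) := jl_mod hdpos hd1
  have hinj := jl_inj (x := x) hmin
  have hd9 : d ≤ 9 := by
    have hfi : Function.Injective (fun k : Fin d => jpow x k) := by
      intro i j h
      exact Fin.ext (hinj i i.isLt j j.isLt h)
    have hle := Fintype.card_le_of_injective _ hfi
    rw [Fintype.card_fin, h9] at hle
    exact hle
  have hd_eq : d = 9 := by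
    interval_cases d
    -- d = 1
    · exfalso
      have hmul : ∀ m n : ℕ, jpow x m * jpow x n = jpow x (m + n) := by
        intro m n
        rw [hper m, hper n, hper (m + n)]
        simp only [Nat.mod_one]
        exact jl_omul _
      have hcard := jl_card_le_of_hmul one_pos hper hmul hx
      rw [h9] at hcard; omega
    -- d = 2
    · exfalso
      have hxx : x * x = (1 : Q) * 1 := by
        rw [jl_mone, ← jpow_two', hd1]
      have hx1 : x = 1 := jl_sq_inj h9 hxx
      have h10 := hinj 1 (by norm_num) 0 (by norm_num) (by rw [jpow_one', jpow_zero', hx1])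
      norm_num at h10
    -- d = 3
    · exfalso
      have hmul : ∀ m n : ℕ, jpow x m * jpow x n = jpow x (m + n) := by
        intro m n
        have h3 : m % 3 = 0 ∨ m % 3 = 1 ∨ m % 3 = 2 := by omega
        rw [hper m, hper (m + n)]
        rcases h3 with h | h | h <;> rw [h]
        · rw [show (m + n) % 3 = n % 3 from by omega, ← hper n]
          exact jl_omul _
        · rw [show (m + n) % 3 = (n + 1) % 3 from by omega, ← hper (n + 1), jpow_one']
          rfl
        · rw [show (m + n) % 3 = (n + 2) % 3 from by omega, ← hper (n + 2)]
          exact jJ2 x n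
      have hcard := jl_card_le_of_hmul (by norm_num) hper hmul hx
      rw [h9] at hcard; omega
    -- d = 4
    · exfalso
      have h22 : jpow x 2 * jpow x 2 = jpow x 4 := jJ2 x 2
      have hsq : jpow x 2 = 1 := jl_sq_inj h9 (by rw [h22, hd1, jl_mone])
      have h20 := hinj 2 (by norm_num) 0 (by norm_num) (by rw [hsq, jpow_zero'])
      norm_num at h20
    -- d = 5
    · exfalso
      have hc8 : ∀ n, jpow x 8 * jpow x n = jpow x (n + 8) := by
        have h44 : jpow x 4 * jpow x 4 = jpow x 8 := jl_c4 x 4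
        have h48 : ∀ y : Q, jpow x 4 * (jpow x 8 * y) = jpow x 8 * (jpow x 4 * y) := by
          intro y
          have hj := JordanLoop.jordan (jpow x 4) y
          rw [h44, jl_comm (jpow x 8 * y) (jpow x 4), jl_comm y (jpow x 4)] at hj
          exact hj
        have h4m : ∀ m : ℕ, jpow x 8 * jpow x (4 * m) = jpow x (4 * m + 8) := by
          intro m
          induction m with
          | zero => rw [Nat.mul_zero, jpow_zero', jl_mone, Nat.zero_add]
          | succ m ih =>
            have e : 4 * (m + 1) = 4 * m + 4 := by omega
            rw [e]
            have h1 : jpow x (4 * m + 4) = jpow x 4 * jpow x (4 * m) :=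
              (jl_c4 x (4 * m)).symm
            rw [h1, ← h48 (jpow x (4 * m)), ih, jl_c4]
        intro n
        have h1 : jpow x n = jpow x (16 * (n % 5)) := by
          rw [hper n, hper (16 * (n % 5))]
          congr 1
          omega
        have h2 : jpow x (n + 8) = jpow x (16 * (n % 5) + 8) := by
          rw [hper (n + 8), hper (16 * (n % 5) + 8)]
          congr 1
          omega
        rw [h1, h2, show 16 * (n % 5) = 4 * (4 * (n % 5)) from by ring]
        exact h4m (4 * (n % 5))
      have hmul : ∀ m n : ℕ, jpow x m * jpow x n = jpow x (m + n) := by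
        intro m n
        have h5 : m % 5 = 0 ∨ m % 5 = 1 ∨ m % 5 = 2 ∨ m % 5 = 3 ∨ m % 5 = 4 := by omega
        rw [hper m, hper (m + n)]
        rcases h5 with h | h | h | h | h <;> rw [h]
        · rw [show (m + n) % 5 = n % 5 from by omega, ← hper n]
          exact jl_omul _
        · rw [show (m + n) % 5 = (n + 1) % 5 from by omega, ← hper (n + 1), jpow_one']
          rfl
        · rw [show (m + n) % 5 = (n + 2) % 5 from by omega, ← hper (n + 2)]
          exact jJ2 x n
        · rw [show (m + n) % 5 = (n + 8) % 5 from by omega, ← hper (n + 8),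
            show jpow x 3 = jpow x 8 from by rw [hper 8]]
          exact hc8 n
        · rw [show (m + n) % 5 = (n + 4) % 5 from by omega, ← hper (n + 4)]
          exact jl_c4 x n
      have hcard := jl_card_le_of_hmul (by norm_num) hper hmul hx
      rw [h9] at hcard; omega
    -- d = 6
    · exfalso
      have h44 : jpow x 4 * jpow x 4 = jpow x 8 := jl_c4 x 4
      have h82 : jpow x 8 = jpow x 2 := by rw [hper 8]
      have hsq : jpow x 4 = x := jl_sq_inj h9 (by rw [h44, h82, jpow_two'])
      have h41 := hinj 4 (by norm_num) 1 (by norm_num) (by rw [hsq, jpow_one'])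
      norm_num at h41
    -- d = 7
    · exfalso
      obtain ⟨u, hu⟩ : ∃ u : Q, ∀ k : ℕ, jpow x k ≠ u := by
        by_contra hcon
        push_neg at hcon
        have hsurj : Function.Surjective (fun k : Fin 7 => jpow x k) := by
          intro y
          obtain ⟨k, hk⟩ := hcon y
          exact ⟨⟨k % 7, by omega⟩, by show jpow x (k % 7) = y; rw [← hper k]; exact hk⟩
        have hle := Fintype.card_le_of_surjective _ hsurj
        rw [h9, Fintype.card_fin] at hle
        omega
      have hxu : ∀ k : ℕ, jpow x k ≠ x * u := by
        intro k hk
        have h1 : jpow x (k + 7) = jpow x k := by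
          rw [hper (k + 7), show (k + 7) % 7 = k % 7 from by omega, ← hper k]
        have h2 : x * jpow x (k + 6) = x * u := by
          rw [← jpow_succ']
          exact h1.trans hk
        exact hu (k + 6) (jl_left_cancel h2)
      have hx2u : ∀ k : ℕ, jpow x k ≠ jpow x 2 * u := by
        intro k hk
        have h1 : jpow x (k + 5 + 2) = jpow x k := by
          rw [hper (k + 5 + 2), show (k + 5 + 2) % 7 = k % 7 from by omega, ← hper k]
        exact hu (k + 5) (jl_left_cancel ((jJ2 x (k + 5)).trans (h1.trans hk)))
      have hne10 : x ≠ 1 := by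
        intro h
        have h10 := hinj 1 (by norm_num) 0 (by norm_num) (by rw [jpow_one', jpow_zero', h])
        norm_num at h10
      have hvu : x * u ≠ u := by
        intro h
        exact hne10 (jl_right_unique h (jl_omul u))
      have hinjOn : Set.InjOn (fun k : ℕ => jpow x k) ↑(Finset.range 7) := by
        intro i hi j hj h
        simp only [Finset.coe_range, Set.mem_Iio] at hi hj
        exact hinj i hi j hj h
      set S : Finset Q := (Finset.range 7).image (jpow x) with hS
      have hScard : S.card = 7 := by
        rw [hS, Finset.card_image_of_injOn hinjOn, Finset.card_range]
      have huS : u ∉ S := by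
        intro h
        obtain ⟨k, _, hk⟩ := Finset.mem_image.mp h
        exact hu k hk
      have hxuS : x * u ∉ S := by
        intro h
        obtain ⟨k, _, hk⟩ := Finset.mem_image.mp h
        exact hxu k hk
      have huT' : u ∉ insert (x * u) S := by
        simp only [Finset.mem_insert]
        push_neg
        exact ⟨fun h => hvu h.symm, huS⟩
      set T : Finset Q := insert u (insert (x * u) S) with hT
      have hTcard : T.card = 9 := by
        rw [hT, Finset.card_insert_of_notMem huT', Finset.card_insert_of_notMem hxuS,
          hScard]
      have hTuniv : T = Finset.univ := Finset.eq_univ_of_card T (by rw [hTcard, h9])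
      have hmemT : jpow x 2 * u ∈ T := hTuniv ▸ Finset.mem_univ _
      rw [hT] at hmemT
      simp only [Finset.mem_insert] at hmemT
      rcases hmemT with h | h | h
      · have h2 := jl_right_unique h (jl_omul u)
        have h20 := hinj 2 (by norm_num) 0 (by norm_num) (by rw [h2, jpow_zero'])
        norm_num at h20
      · have h2 := jl_right_unique h rfl
        have h21 := hinj 2 (by norm_num) 1 (by norm_num) (by rw [h2, jpow_one'])
        norm_num at h21
      · obtain ⟨k, _, hk⟩ := Finset.mem_image.mp h
        exact hx2u k hk
    -- d = 8
    · exfalso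
      have h44 : jpow x 4 * jpow x 4 = jpow x 8 := jl_c4 x 4
      have hsq : jpow x 4 = 1 := jl_sq_inj h9 (by rw [h44, hd1, jl_mone])
      have h40 := hinj 4 (by norm_num) 0 (by norm_num) (by rw [hsq, jpow_zero'])
      norm_num at h40
    -- d = 9
    · rfl
  subst hd_eq
  constructor
  · have hfb : Function.Bijective (fun k : Fin 9 => jpow x k) := by
      rw [Fintype.bijective_iff_injective_and_card]
      exact ⟨fun i j h => Fin.ext (hinj i i.isLt j j.isLt h),
        by rw [Fintype.card_fin, h9]⟩
    intro y
    obtain ⟨k, hk⟩ := hfb.2 y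
    exact ⟨k.1, by have := k.isLt; omega, hk⟩
  · exact hper
end
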